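/- Let p ≥ 3 be prime, B satisfy Jenkins' identity, and (D/p) = 1, (−d/p) = −1, p² ∤ d. Then the p-adic limit L := lim_{n→∞} B(D, p^{2n}d) exists and equals 2·Σ_{k=0}^{∞} p^k B(p^{2k}D, d) (a p-adically convergent series); in particular L ≡ 2B(D, d) (mod p). -/

import Mathlib

open Filter Finset

/-- Jenkins' identity for the traces of singular moduli `B(D,d)`, with the convention
that `B(a,b) = 0` for invalid arguments. -/
def JenkinsId (p : ℕ) [Fact p.Prime] (B : ℕ → ℕ → ℤ) : Prop :=
  ∀ D d n : ℕ, 1 ≤ n →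
    B D (p ^ (2 * n) * d) =
      (p : ℤ) ^ n * B (p ^ (2 * n) * D) d
        + ∑ k ∈ range n, (legendreSym p (D : ℤ)) ^ (n - k - 1) *
            ((if p ^ 2 ∣ D then B (D / p ^ 2) (p ^ (2 * k) * d) else 0)
              - (p : ℤ) ^ (k + 1) *
                (if p ^ 2 ∣ d then B (p ^ (2 * k) * D) (d / p ^ 2) else 0))
        + ∑ k ∈ range n, (legendreSym p (D : ℤ)) ^ (n - k - 1) *
            ((legendreSym p (D : ℤ) - legendreSym p (-(d : ℤ))) * (p : ℤ) ^ k *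
              B (p ^ k * D) d)

/- Comparing Jenkins' identity for `n = 2` at `(D', d)` with its `n = 1` instances at
`(D', d)`, `(D', p²d)` and `(p²D', d)` gives `((D'/p) + 1) p (B(pD', d) - B(p²D', d)) = 0`.
Since `(p^k D / p) ∈ {0, 1}`, the values `B(p^k D, d)` for `k ≥ 1` all coincide. The identity
then collapses to `B(D, p^{2n}d) = p^n B(p^{2n}D, d) + 2 Σ_{k<n} p^k B(p^{2k}D, d)`, whose
right-hand side converges `p`-adically because `|p^n B|_p ≤ p^{-n}`; all terms of the limit
series beyond the first are divisible by `p`. -/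

theorem Summable.tendsto_add_const_mul_sum_range {R : Type*} [Ring R] [TopologicalSpace R]
    [IsTopologicalRing R] {f : ℕ → R} (hf : Summable f) (c : R) :
    Tendsto (fun n => f n + c * ∑ k ∈ range n, f k) atTop (nhds (c * ∑' k, f k)) := by
  simpa using hf.tendsto_atTop_zero.add (hf.hasSum.tendsto_sum_nat.const_mul c)

namespace Padic

variable {p : ℕ} [Fact p.Prime]

lemma norm_pow_mul_intCast_le (k : ℕ) (b : ℤ) :
    ‖(p : ℚ_[p]) ^ k * b‖ ≤ (p : ℝ)⁻¹ ^ k := by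
  rw [norm_mul, norm_pow, norm_p]
  exact mul_le_of_le_one_right (by positivity) (norm_int_le_one b)

lemma summable_pow_mul_intCast (b : ℕ → ℤ) : Summable fun k => (p : ℚ_[p]) ^ k * b k :=
  .of_norm_bounded (summable_geometric_of_lt_one (by positivity)
    (inv_lt_one_of_one_lt₀ (by exact_mod_cast (Fact.out : p.Prime).one_lt)))
    fun k => norm_pow_mul_intCast_le k (b k)

lemma norm_tsum_pow_mul_intCast_sub_le (b : ℕ → ℤ) :
    ‖∑' k, (p : ℚ_[p]) ^ k * b k - b 0‖ ≤ (p : ℝ)⁻¹ := by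
  rw [(summable_pow_mul_intCast b).tsum_eq_zero_add, pow_zero, one_mul, add_sub_cancel_left]
  refine IsUltrametricDist.norm_tsum_le_of_forall_le_of_nonneg (by positivity) fun k => ?_
  calc ‖(p : ℚ_[p]) ^ (k + 1) * b (k + 1)‖ ≤ (p : ℝ)⁻¹ ^ (k + 1) :=
        norm_pow_mul_intCast_le _ _
    _ ≤ (p : ℝ)⁻¹ := pow_le_of_le_one (by positivity)
        (inv_le_one_of_one_le₀ (by exact_mod_cast (Fact.out : p.Prime).one_le)) k.succ_ne_zero

end Padic

variable {p : ℕ} [Fact p.Prime] {B : ℕ → ℕ → ℤ}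

lemma legendreSym_eq_zero_of_dvd {a : ℤ} (h : (p : ℤ) ∣ a) : legendreSym p a = 0 :=
  (legendreSym.eq_zero_iff p a).2 ((ZMod.intCast_zmod_eq_zero_iff_dvd a p).2 h)

namespace JenkinsId

variable {D d : ℕ}

theorem apply_mul_eq_apply_pow_two_mul (hJ : JenkinsId p B) (hd : legendreSym p (-d) = -1)
    (hd2 : ¬ p ^ 2 ∣ d) (hD : legendreSym p D ≠ -1) :
    B (p * D) d = B (p ^ 2 * D) d := by
  have hp : (p : ℤ) ≠ 0 := by exact_mod_cast (Fact.out : p.Prime).ne_zero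
  have hsq : ∀ x : ℕ, (p : ℤ) ∣ ((p ^ 2 * x : ℕ) : ℤ) := fun x =>
    Int.natCast_dvd_natCast.2 ((dvd_pow_self p two_ne_zero).mul_right x)
  have hdiv : ∀ x, p ^ 2 * x / p ^ 2 = x := fun x =>
    Nat.mul_div_cancel_left x (pow_pos (Fact.out : p.Prime).pos 2)
  have h2 := hJ D d 2 (by norm_num)
  have h1 := hJ D d 1 le_rfl
  have h1d := hJ D (p ^ 2 * d) 1 le_rfl
  have h1D := hJ (p ^ 2 * D) d 1 le_rfl
  simp only [sum_range_succ, sum_range_zero, Nat.reduceMul, Nat.reduceSub, pow_zero, pow_one,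
    one_mul, mul_one, zero_add, if_neg hd2, dvd_mul_right, if_true, hdiv, hd,
    legendreSym_eq_zero_of_dvd (hsq _), legendreSym_eq_zero_of_dvd (dvd_neg.2 (hsq _)),
    ← mul_assoc, ← pow_add, Nat.reduceAdd] at h2 h1 h1d h1D
  have key : (legendreSym p D + 1) * p * B (p * D) d =
      (legendreSym p D + 1) * p * B (p ^ 2 * D) d := by
    linear_combination h1d - h2 + p * h1D + legendreSym p D * h1
  exact mul_left_cancel₀ (mul_ne_zero (fun h => hD (eq_neg_of_add_eq_zero_left h)) hp) key

theorem apply_pow_mul_eq_apply_mul (hJ : JenkinsId p B) (hd : legendreSym p (-d) = -1)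
    (hd2 : ¬ p ^ 2 ∣ d) (hD : legendreSym p D = 1) :
    ∀ k, 1 ≤ k → B (p ^ k * D) d = B (p * D) d := by
  refine Nat.le_induction (by rw [pow_one]) fun k hk ih => ?_
  have hkD : legendreSym p (p ^ (k - 1) * D : ℕ) ≠ -1 := by
    rcases Nat.eq_zero_or_pos (k - 1) with h | h
    · rw [h, pow_zero, one_mul, hD]; decide
    · rw [legendreSym_eq_zero_of_dvd (Int.natCast_dvd_natCast.2
        ((dvd_pow_self p h.ne').mul_right D))]; decide
  have := hJ.apply_mul_eq_apply_pow_two_mul hd hd2 hkD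
  rw [← mul_assoc, ← mul_assoc, ← pow_succ', ← pow_add] at this
  rwa [show k - 1 + 1 = k by omega, show 2 + (k - 1) = k + 1 by omega, ih, eq_comm] at this

theorem apply_pow_two_mul_eq_apply_pow_mul (hJ : JenkinsId p B) (hd : legendreSym p (-d) = -1)
    (hd2 : ¬ p ^ 2 ∣ d) (hD : legendreSym p D = 1) (k : ℕ) :
    B (p ^ (2 * k) * D) d = B (p ^ k * D) d := by
  rcases Nat.eq_zero_or_pos k with rfl | hk
  · rfl
  · rw [hJ.apply_pow_mul_eq_apply_mul hd hd2 hD _ hk,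
      hJ.apply_pow_mul_eq_apply_mul hd hd2 hD _ (by omega)]

theorem apply_pow_two_mul_right (hJ : JenkinsId p B) (hd : legendreSym p (-d) = -1)
    (hd2 : ¬ p ^ 2 ∣ d) (hD : legendreSym p D = 1) (n : ℕ) :
    B D (p ^ (2 * n) * d) =
      p ^ n * B (p ^ (2 * n) * D) d
        + 2 * ∑ k ∈ range n, (p : ℤ) ^ k * B (p ^ (2 * k) * D) d := by
  rcases Nat.eq_zero_or_pos n with rfl | hn
  · simp
  have hpD2 : ¬ p ^ 2 ∣ D := fun h => by
    rw [legendreSym_eq_zero_of_dvd (Int.natCast_dvd_natCast.2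
      ((dvd_pow_self p two_ne_zero).trans h))] at hD
    exact zero_ne_one hD
  rw [hJ D d n hn, mul_sum]
  simp only [hD, hd, if_neg hpD2, if_neg hd2, one_pow, one_mul, mul_zero, sub_zero,
    sum_const_zero, add_zero, hJ.apply_pow_two_mul_eq_apply_pow_mul hd hd2 hD]
  congr 1
  exact sum_congr rfl fun k _ => by ring

end JenkinsId

theorem jenkins_limit_eq_series_general (p : ℕ) [Fact p.Prime]
    (B : ℕ → ℕ → ℤ) (hJ : JenkinsId p B) (D d : ℕ)
    (hD : legendreSym p (D : ℤ) = 1) (hd : legendreSym p (-(d : ℤ)) = -1)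
    (hd2 : ¬ p ^ 2 ∣ d) :
    ∃ L : ℚ_[p],
      Tendsto (fun n : ℕ => ((B D (p ^ (2 * n) * d) : ℤ) : ℚ_[p])) atTop (nhds L) ∧
        L = 2 * ∑' k : ℕ, (p : ℚ_[p]) ^ k * ((B (p ^ (2 * k) * D) d : ℤ) : ℚ_[p]) ∧
        ‖L - 2 * ((B D d : ℤ) : ℚ_[p])‖ ≤ ((p : ℝ))⁻¹ := by
  set b : ℕ → ℤ := fun k => B (p ^ (2 * k) * D) d
  refine ⟨_, ?_, rfl, ?_⟩
  · convert (Padic.summable_pow_mul_intCast b).tendsto_add_const_mul_sum_range 2 using 2 with n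
    simp [hJ.apply_pow_two_mul_right hd hd2 hD n, b]
  · have hb0 : b 0 = B D d := by simp [b]
    rw [← hb0, ← mul_sub, norm_mul]
    have h2 : ‖(2 : ℚ_[p])‖ ≤ 1 := by exact_mod_cast Padic.norm_int_le_one 2
    exact (mul_le_of_le_one_left (norm_nonneg _) h2).trans
      (Padic.norm_tsum_pow_mul_intCast_sub_le b)

/-- If `(D/p) = 1`, `(−d/p) = −1` and `p² ∤ d`, then the `p`-adic limit
`L = lim_{n→∞} B(D, p^{2n}d)` exists and equals the `p`-adically convergent series
`2·Σ_{k=0}^∞ p^k B(p^{2k}D, d)`; in particular `L ≡ 2B(D,d) (mod p)`. -/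
theorem jenkins_limit_eq_series (p : ℕ) [Fact p.Prime] (hp3 : 3 ≤ p)
    (B : ℕ → ℕ → ℤ) (hJ : JenkinsId p B) (D d : ℕ)
    (hD : legendreSym p (D : ℤ) = 1) (hd : legendreSym p (-(d : ℤ)) = -1)
    (hd2 : ¬ p ^ 2 ∣ d) :
    ∃ L : ℚ_[p],
      Tendsto (fun n : ℕ => ((B D (p ^ (2 * n) * d) : ℤ) : ℚ_[p])) atTop (nhds L) ∧
        L = 2 * ∑' k : ℕ, (p : ℚ_[p]) ^ k * ((B (p ^ (2 * k) * D) d : ℤ) : ℚ_[p]) ∧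
        ‖L - 2 * ((B D d : ℤ) : ℚ_[p])‖ ≤ ((p : ℝ))⁻¹ :=
  jenkins_limit_eq_series_general p B hJ D d hD hd hd2
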